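/- Suppose dim E = 2 and suppose the data (C,c) is pseudo-parallel with value φ ∈ ℝ, φ ≠ 0. Then C is minimal at the point, i.e. for every orthonormal basis {e₁, e₂} of E and every v ∈ E one has C(e₁,e₁,v) + C(e₂,e₂,v) = 0 (equivalently, the trace of A_v vanishes for all v, i.e. the mean curvature vector vanishes). -/

import Mathlib

/-!
The curvature operator `R(X,Y)` is skew-adjoint, so the derivative `R(X,Y)·h` of the cubic form
is symmetric in its last two slots, just like `h`. Pseudo-parallelity with `φ ≠ 0` then forces
`Q(g,h)` to be symmetric in those slots too, and for orthonormal `e₁, e₂` the antisymmetric part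
of `Q(g,h)(e₁, e₂, v, ·, ·)` evaluated at `(e₂, e₁)` is exactly `C(e₁,e₁,v) + C(e₂,e₂,v)`.
-/

open RealInnerProductSpace

namespace PseudoParallel

variable {E : Type*} [NormedAddCommGroup E] [InnerProductSpace ℝ E]

/-- `c X ∧ Y + [A_X, A_Y]`, the curvature given by the Gauss equation. -/
def gaussCurvature (c : ℝ) (A : E → E → E) (X Y Z : E) : E :=
  c • (⟪Y, Z⟫ • X - ⟪X, Z⟫ • Y) + A X (A Y Z) - A Y (A X Z)

/-- `(S·C)(V, W, Z)`: the cubic form `C` differentiated by the endomorphism `S`. -/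
def cubicDerivation (C : E →ₗ[ℝ] E →ₗ[ℝ] E →ₗ[ℝ] ℝ) (A : E → E → E) (S : E → E)
    (V W Z : E) : ℝ :=
  ⟪S (A V W), Z⟫ - C (S V) W Z - C V (S W) Z

/-- The scalar component of the Tachibana tensor `Q(g, h)`. -/
def tachibana (C : E →ₗ[ℝ] E →ₗ[ℝ] E →ₗ[ℝ] ℝ) (X Y V W Z : E) : ℝ :=
  ⟪Y, V⟫ * C X W Z - ⟪X, V⟫ * C Y W Z + ⟪Y, W⟫ * C X V Z - ⟪X, W⟫ * C Y V Z

theorem inner_gaussCurvature_left {A : E → E → E}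
    (hA : ∀ X U Z : E, ⟪A X U, Z⟫ = ⟪U, A X Z⟫) (c : ℝ) (X Y U Z : E) :
    ⟪gaussCurvature c A X Y U, Z⟫ = -⟪U, gaussCurvature c A X Y Z⟫ := by
  have hXY : ⟪A X (A Y U), Z⟫ = ⟪U, A Y (A X Z)⟫ := by rw [hA, hA]
  have hYX : ⟪A Y (A X U), Z⟫ = ⟪U, A X (A Y Z)⟫ := by rw [hA, hA]
  simp only [gaussCurvature, inner_add_left, inner_sub_left, inner_add_right, inner_sub_right,
    real_inner_smul_left, real_inner_smul_right, hXY, hYX]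
  rw [real_inner_comm X U, real_inner_comm Y U, real_inner_comm Z X, real_inner_comm Z Y]
  ring

theorem cubicDerivation_comm {C : E →ₗ[ℝ] E →ₗ[ℝ] E →ₗ[ℝ] ℝ}
    (hC : ∀ X Y Z : E, C X Y Z = C X Z Y) {A : E → E → E}
    (hA : ∀ X Y Z : E, ⟪A X Y, Z⟫ = C X Y Z) {S : E → E}
    (hS : ∀ U Z : E, ⟪S U, Z⟫ = -⟪U, S Z⟫) (V W Z : E) :
    cubicDerivation C A S V W Z = cubicDerivation C A S V Z W := by
  simp only [cubicDerivation, hS _ Z, hS _ W, hA]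
  rw [hC V W (S Z), hC V Z (S W), hC (S V) W Z]
  ring

theorem tachibana_sub_tachibana_swap {C : E →ₗ[ℝ] E →ₗ[ℝ] E →ₗ[ℝ] ℝ}
    (hC : ∀ X Y Z : E, C X Y Z = C X Z Y) {e₁ e₂ : E}
    (h₁ : ⟪e₁, e₁⟫ = 1) (h₂ : ⟪e₂, e₂⟫ = 1) (h₁₂ : ⟪e₁, e₂⟫ = 0) (v : E) :
    tachibana C e₁ e₂ v e₂ e₁ - tachibana C e₁ e₂ v e₁ e₂ = C e₁ e₁ v + C e₂ e₂ v := by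
  simp only [tachibana, h₁, h₂, h₁₂, real_inner_comm e₁ e₂]
  rw [hC e₁ e₂ e₁, hC e₂ e₂ e₁, hC e₁ v e₁, hC e₂ v e₂]
  ring

end PseudoParallel

open PseudoParallel in
theorem surface_pseudo_parallel_minimal_general
    {E : Type*} [NormedAddCommGroup E] [InnerProductSpace ℝ E]
    (C : E →ₗ[ℝ] E →ₗ[ℝ] E →ₗ[ℝ] ℝ)
    (hC2 : ∀ X Y Z : E, C X Y Z = C X Z Y)
    (A : E → E → E)
    (hA : ∀ X Y Z : E, ⟪A X Y, Z⟫ = C X Y Z)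
    (c : ℝ) (R : E → E → E → E)
    (hR : ∀ X Y Z : E, R X Y Z = c • (⟪Y, Z⟫ • X - ⟪X, Z⟫ • Y) + A X (A Y Z) - A Y (A X Z))
    (P : E → E → E → E → E → ℝ)
    (hP : ∀ X Y V W Z : E, P X Y V W Z
      = ⟪R X Y (A V W), Z⟫ - C (R X Y V) W Z - C V (R X Y W) Z)
    (Q : E → E → E → E → E → ℝ)
    (hQ : ∀ X Y V W Z : E, Q X Y V W Z
      = ⟪Y, V⟫ * C X W Z - ⟪X, V⟫ * C Y W Z + ⟪Y, W⟫ * C X V Z - ⟪X, W⟫ * C Y V Z)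
    (φ : ℝ)
    (hpp : ∀ X Y V W Z : E, P X Y V W Z + φ * Q X Y V W Z = 0)
    (hφ : φ ≠ 0) :
    ∀ e₁ e₂ : E, ‖e₁‖ = 1 → ‖e₂‖ = 1 → ⟪e₁, e₂⟫ = 0 →
      ∀ v : E, C e₁ e₁ v + C e₂ e₂ v = 0 := by
  obtain rfl : R = gaussCurvature c A := by funext X Y Z; exact hR X Y Z
  obtain rfl : P = fun X Y => cubicDerivation C A (gaussCurvature c A X Y) := by
    funext X Y V W Z; exact hP X Y V W Z
  obtain rfl : Q = tachibana C := by funext X Y V W Z; exact hQ X Y V W Z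
  have hAsymm : ∀ X U Z : E, ⟪A X U, Z⟫ = ⟪U, A X Z⟫ := fun X U Z => by
    rw [hA, hC2, ← hA, real_inner_comm]
  have hPsymm (X Y V W Z : E) :=
    cubicDerivation_comm hC2 hA (inner_gaussCurvature_left hAsymm c X Y) V W Z
  have hQsymm (X Y V W Z : E) : tachibana C X Y V W Z = tachibana C X Y V Z W := by
    have hWZ := hpp X Y V W Z
    have hZW := hpp X Y V Z W
    simp only [hPsymm X Y V W Z] at hWZ
    exact mul_left_cancel₀ hφ (by linarith)
  intro e₁ e₂ he₁ he₂ h₁₂ v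
  rw [← tachibana_sub_tachibana_swap hC2 (by simp [he₁]) (by simp [he₂]) h₁₂, hQsymm]
  ring

theorem surface_pseudo_parallel_minimal
    {E : Type*} [NormedAddCommGroup E] [InnerProductSpace ℝ E] [FiniteDimensional ℝ E]
    (hdim : Module.finrank ℝ E = 2)
    (C : E →ₗ[ℝ] E →ₗ[ℝ] E →ₗ[ℝ] ℝ)
    (hC1 : ∀ X Y Z : E, C X Y Z = C Y X Z)
    (hC2 : ∀ X Y Z : E, C X Y Z = C X Z Y)
    (A : E → E → E)
    (hA : ∀ X Y Z : E, ⟪A X Y, Z⟫ = C X Y Z)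
    (c : ℝ) (R : E → E → E → E)
    (hR : ∀ X Y Z : E, R X Y Z = c • (⟪Y, Z⟫ • X - ⟪X, Z⟫ • Y) + A X (A Y Z) - A Y (A X Z))
    (P : E → E → E → E → E → ℝ)
    (hP : ∀ X Y V W Z : E, P X Y V W Z
      = ⟪R X Y (A V W), Z⟫ - C (R X Y V) W Z - C V (R X Y W) Z)
    (Q : E → E → E → E → E → ℝ)
    (hQ : ∀ X Y V W Z : E, Q X Y V W Z
      = ⟪Y, V⟫ * C X W Z - ⟪X, V⟫ * C Y W Z + ⟪Y, W⟫ * C X V Z - ⟪X, W⟫ * C Y V Z)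
    (φ : ℝ)
    (hpp : ∀ X Y V W Z : E, P X Y V W Z + φ * Q X Y V W Z = 0)
    (hφ : φ ≠ 0) :
    ∀ e₁ e₂ : E, ‖e₁‖ = 1 → ‖e₂‖ = 1 → ⟪e₁, e₂⟫ = 0 →
      ∀ v : E, C e₁ e₁ v + C e₂ e₂ v = 0 :=
  surface_pseudo_parallel_minimal_general C hC2 A hA c R hR P hP Q hQ φ hpp hφ
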